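/- Let F : ℍ^{N×S} → ℍ^{M×R} and G : ℍ^{N×S} → ℍ^{R×P} be ℝ-differentiable at Q ∈ ℍ^{N×S}, let H(Q) = F(Q)G(Q) (matrix product), and let μ ∈ ℍ, μ ≠ 0. Then the conjugate GHR Jacobian of H satisfies the product rule D_{Q^{μ*}}H(Q) = (I_P ⊗ F(Q)) · D_{Q^{μ*}}G(Q) + D_{Q^{μ*}}F̃(Q), where F̃ is the function P ↦ F(P)·G(Q) with G held constant at its value at Q, and I_P ⊗ F(Q) is the Kronecker product, i.e. the MP × RP matrix with ((m,p),(r,p′)) entry equal to F(Q)_{mr} if p = p′ and 0 otherwise. -/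

import Mathlib

open scoped Quaternion

noncomputable section

/-- The imaginary unit `i` of the quaternions. -/
def qI : ℍ[ℝ] := ⟨0, 1, 0, 0⟩
/-- The imaginary unit `j` of the quaternions. -/
def qJ : ℍ[ℝ] := ⟨0, 0, 1, 0⟩
/-- The imaginary unit `k` of the quaternions. -/
def qK : ℍ[ℝ] := ⟨0, 0, 0, 1⟩

/-- The `N × S` quaternion matrix with entry `d` at position `(n,s)` and `0` elsewhere. -/
def single {N S : ℕ} (n : Fin N) (s : Fin S) (d : ℍ[ℝ]) : Fin N → Fin S → ℍ[ℝ] :=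
  Pi.single n (Pi.single s d)

/-- Real directional (Fréchet) derivative of a scalar function of a matrix variable, in the
direction `d` at the single entry `(n,s)` (the other entries held fixed). -/
def pd {N S : ℕ} (f : (Fin N → Fin S → ℍ[ℝ]) → ℍ[ℝ]) (Q : Fin N → Fin S → ℍ[ℝ])
    (n : Fin N) (s : Fin S) (d : ℍ[ℝ]) : ℍ[ℝ] :=
  fderiv ℝ f Q (single n s d)

/-- Left GHR derivative `∂f/∂q_{ns}^{μ*}` of a scalar function `f` with respect to the entry
`q_{ns}` of its matrix argument:
`¼(∂f/∂q_a + (∂f/∂q_b) i^μ + (∂f/∂q_c) j^μ + (∂f/∂q_d) k^μ)`, with `x^μ = μ x μ⁻¹`. -/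
def ghrEStar {N S : ℕ} (μ : ℍ[ℝ]) (f : (Fin N → Fin S → ℍ[ℝ]) → ℍ[ℝ])
    (Q : Fin N → Fin S → ℍ[ℝ]) (n : Fin N) (s : Fin S) : ℍ[ℝ] :=
  (1 / 4 : ℝ) • (pd f Q n s 1 + pd f Q n s qI * (μ * qI * μ⁻¹)
    + pd f Q n s qJ * (μ * qJ * μ⁻¹) + pd f Q n s qK * (μ * qK * μ⁻¹))

/-- The conjugate GHR Jacobian `D_{Q^{μ*}}F(Q)`: the `MP × NS` quaternion matrix whose
`((m,p),(n,s))` entry is `∂F_{mp}/∂q_{ns}^{μ*}`. -/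
def ghrJacStar {N S M P : ℕ} (μ : ℍ[ℝ])
    (F : (Fin N → Fin S → ℍ[ℝ]) → (Fin M → Fin P → ℍ[ℝ]))
    (Q : Fin N → Fin S → ℍ[ℝ]) : Matrix (Fin M × Fin P) (Fin N × Fin S) ℍ[ℝ] :=
  Matrix.of fun mp ns => ghrEStar μ (fun X => F X mp.1 mp.2) Q ns.1 ns.2

/-- Quaternion matrix product. -/
def mmul {M R P : ℕ} (A : Fin M → Fin R → ℍ[ℝ]) (B : Fin R → Fin P → ℍ[ℝ]) :
    Fin M → Fin P → ℍ[ℝ] :=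
  fun m p => ∑ r, A m r * B r p

/-- The Kronecker product `I_P ⊗ A`: the `MP × RP` matrix with `((m,p),(r,p′))` entry
`A_{mr}` if `p = p′` and `0` otherwise. -/
def kronIdLeft {M R : ℕ} (P : ℕ) (A : Fin M → Fin R → ℍ[ℝ]) :
    Matrix (Fin M × Fin P) (Fin R × Fin P) ℍ[ℝ] :=
  Matrix.of fun mp rp => if mp.2 = rp.2 then A mp.1 rp.1 else 0

section EntryDerivative

variable {N S : ℕ} {Q : Fin N → Fin S → ℍ[ℝ]} {n : Fin N} {s : Fin S}

lemma pd_fun_sum {ι : Type*} {u : Finset ι} {f : ι → (Fin N → Fin S → ℍ[ℝ]) → ℍ[ℝ]}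
    (h : ∀ i ∈ u, DifferentiableAt ℝ (f i) Q) (d : ℍ[ℝ]) :
    pd (fun X => ∑ i ∈ u, f i X) Q n s d = ∑ i ∈ u, pd (f i) Q n s d := by
  simp only [pd, fderiv_fun_sum h, FunLike.coe_sum, Finset.sum_apply]

lemma ghrEStar_fun_sum (μ : ℍ[ℝ]) {ι : Type*} {u : Finset ι}
    {f : ι → (Fin N → Fin S → ℍ[ℝ]) → ℍ[ℝ]} (h : ∀ i ∈ u, DifferentiableAt ℝ (f i) Q) :
    ghrEStar μ (fun X => ∑ i ∈ u, f i X) Q n s = ∑ i ∈ u, ghrEStar μ (f i) Q n s := by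
  simp only [ghrEStar, pd_fun_sum h, Finset.sum_mul, ← Finset.sum_add_distrib, Finset.smul_sum]

lemma pd_fun_mul {f g : (Fin N → Fin S → ℍ[ℝ]) → ℍ[ℝ]}
    (hf : DifferentiableAt ℝ f Q) (hg : DifferentiableAt ℝ g Q) (d : ℍ[ℝ]) :
    pd (fun X => f X * g X) Q n s d = f Q * pd g Q n s d + pd (fun X => f X * g Q) Q n s d := by
  simp [pd, fderiv_fun_mul' hf hg, fderiv_mul_const' hf, smul_eq_mul]

/-- The GHR derivative multiplies the partial derivatives on the right by `x^μ`, so a constant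
left factor `f(Q)` passes through it. -/
lemma ghrEStar_fun_mul (μ : ℍ[ℝ]) {f g : (Fin N → Fin S → ℍ[ℝ]) → ℍ[ℝ]}
    (hf : DifferentiableAt ℝ f Q) (hg : DifferentiableAt ℝ g Q) :
    ghrEStar μ (fun X => f X * g X) Q n s
      = f Q * ghrEStar μ g Q n s + ghrEStar μ (fun X => f X * g Q) Q n s := by
  simp only [ghrEStar, pd_fun_mul hf hg, mul_add, add_mul, smul_add, mul_smul_comm, mul_assoc]
  abel

end EntryDerivative

lemma DifferentiableAt.apply_apply {E α β F : Type*} [NormedAddCommGroup E] [NormedSpace ℝ E]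
    [Fintype α] [Fintype β] [NormedAddCommGroup F] [NormedSpace ℝ F]
    {f : E → α → β → F} {x : E} (hf : DifferentiableAt ℝ f x) (a : α) (b : β) :
    DifferentiableAt ℝ (fun y => f y a b) x :=
  differentiableAt_pi.mp (differentiableAt_pi.mp hf a) b

lemma kronIdLeft_mul_apply {M R P : ℕ} {ι : Type*} (A : Fin M → Fin R → ℍ[ℝ])
    (B : Matrix (Fin R × Fin P) ι ℍ[ℝ]) (m : Fin M) (p : Fin P) (k : ι) :
    (kronIdLeft P A * B) (m, p) k = ∑ r, A m r * B (r, p) k := by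
  simp [Matrix.mul_apply, Fintype.sum_prod_type, kronIdLeft, ite_mul]

lemma ghrEStar_mmul_apply {N S M R P : ℕ} (μ : ℍ[ℝ])
    {F : (Fin N → Fin S → ℍ[ℝ]) → (Fin M → Fin R → ℍ[ℝ])}
    {G : (Fin N → Fin S → ℍ[ℝ]) → (Fin R → Fin P → ℍ[ℝ])} {Q : Fin N → Fin S → ℍ[ℝ]}
    (hF : DifferentiableAt ℝ F Q) (hG : DifferentiableAt ℝ G Q)
    (m : Fin M) (p : Fin P) (n : Fin N) (s : Fin S) :
    ghrEStar μ (fun X => mmul (F X) (G X) m p) Q n s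
      = ∑ r, F Q m r * ghrEStar μ (fun X => G X r p) Q n s
        + ghrEStar μ (fun X => mmul (F X) (G Q) m p) Q n s := by
  simp only [mmul]
  rw [ghrEStar_fun_sum μ fun r _ => (hF.apply_apply m r).fun_mul (hG.apply_apply r p),
    ghrEStar_fun_sum μ fun r _ => (hF.apply_apply m r).mul_const (G Q r p),
    ← Finset.sum_add_distrib]
  exact Finset.sum_congr rfl fun r _ =>
    ghrEStar_fun_mul μ (hF.apply_apply m r) (hG.apply_apply r p)

theorem ghr_star_product_rule_general {N S M R P : ℕ} (μ : ℍ[ℝ])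
    (F : (Fin N → Fin S → ℍ[ℝ]) → (Fin M → Fin R → ℍ[ℝ]))
    (G : (Fin N → Fin S → ℍ[ℝ]) → (Fin R → Fin P → ℍ[ℝ]))
    (Q : Fin N → Fin S → ℍ[ℝ])
    (hF : DifferentiableAt ℝ F Q) (hG : DifferentiableAt ℝ G Q) :
    ghrJacStar μ (fun X => mmul (F X) (G X)) Q =
      kronIdLeft P (F Q) * ghrJacStar μ G Q
        + ghrJacStar μ (fun X => mmul (F X) (G Q)) Q := by
  refine Matrix.ext fun ⟨m, p⟩ ⟨n, s⟩ => ?_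
  rw [Matrix.add_apply, kronIdLeft_mul_apply]
  exact ghrEStar_mmul_apply μ hF hG m p n s

/-- **Conjugate GHR matrix product rule** (Theorem 1, second identity):
`D_{Q^{μ*}}(FG)(Q) = (I_P ⊗ F(Q)) D_{Q^{μ*}}G(Q) + D_{Q^{μ*}}(F·G(Q))(Q)`,
the last Jacobian taken with `G` held constant at its value at `Q`. -/
theorem ghr_star_product_rule {N S M R P : ℕ} (μ : ℍ[ℝ]) (hμ : μ ≠ 0)
    (F : (Fin N → Fin S → ℍ[ℝ]) → (Fin M → Fin R → ℍ[ℝ]))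
    (G : (Fin N → Fin S → ℍ[ℝ]) → (Fin R → Fin P → ℍ[ℝ]))
    (Q : Fin N → Fin S → ℍ[ℝ])
    (hF : DifferentiableAt ℝ F Q) (hG : DifferentiableAt ℝ G Q) :
    ghrJacStar μ (fun X => mmul (F X) (G X)) Q =
      kronIdLeft P (F Q) * ghrJacStar μ G Q
        + ghrJacStar μ (fun X => mmul (F X) (G Q)) Q :=
  ghr_star_product_rule_general μ F G Q hF hG
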